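/- Let p : E → B and q : F → B be Grothendieck fibrations, and let r : E → F be a morphism of fibrations over B (preserving Cartesian lifts). Suppose every morphism of E is p-Cartesian, every morphism of F is q-Cartesian, and for every object b of B the induced functor on fibers r_b : E_b → F_b is a fibration of groupoids (an isofibration with discrete fibers). Then for every object e of E and every morphism g : f → r(e) in F there exists a unique morphism g̃ : e' → e in E with r(g̃) = g. -/
import Mathlib


open CategoryTheory

/-- A morphism `f : e ⟶ e'` is `π`-Cartesian if every morphism `g` into `e'` whose image
factors through `π.map f` lifts uniquely through `f`. -/
def IsCartesianMor {E B : Type*} [Category E] [Category B] (π : E ⥤ B)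
    {e e' : E} (f : e ⟶ e') : Prop :=
  ∀ (e'' : E) (g : e'' ⟶ e') (h : π.obj e'' ⟶ π.obj e),
    π.map g = h ≫ π.map f →
    ∃! h' : e'' ⟶ e, π.map h' = h ∧ h' ≫ f = g

/-- Fiberwise criterion for right (discrete) fibrations: let `p : E ⥤ B` and `q : F ⥤ B` be
Grothendieck fibrations, `r : E ⥤ F` a morphism of fibrations over `B` (commuting with the
projections and preserving Cartesian morphisms), such that every morphism of `E` is
`p`-Cartesian and every morphism of `F` is `q`-Cartesian, and such that each fiber functor
`r_b : E_b ⥤ F_b` is a discrete fibration (morphisms of the fiber into the image of an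
object lift uniquely, within the fiber).  Then `r` is a discrete fibration: for every
object `e` of `E` and every morphism `g : f ⟶ r(e)` in `F` there is a unique morphism
`g̃ : e' ⟶ e` in `E` with `r(g̃) = g` (up to the identification `r(e') = f`). -/
theorem fiberwise_right_fibration
    {E F B : Type*} [Category E] [Category F] [Category B]
    (p : E ⥤ B) (q : F ⥤ B) (r : E ⥤ F)
    (hcommObj : ∀ e : E, q.obj (r.obj e) = p.obj e)
    (hcommMap : ∀ {e e' : E} (φ : e ⟶ e'),
      q.map (r.map φ) = eqToHom (hcommObj e) ≫ p.map φ ≫ eqToHom (hcommObj e').symm)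
    (hpfib : ∀ (e : E) (b : B) (φ : b ⟶ p.obj e),
      ∃ (e' : E) (ψ : e' ⟶ e) (hb : p.obj e' = b),
        IsCartesianMor p ψ ∧ p.map ψ = eqToHom hb ≫ φ)
    (hqfib : ∀ (f : F) (b : B) (φ : b ⟶ q.obj f),
      ∃ (f' : F) (ψ : f' ⟶ f) (hb : q.obj f' = b),
        IsCartesianMor q ψ ∧ q.map ψ = eqToHom hb ≫ φ)
    (hrpres : ∀ {e e' : E} (φ : e ⟶ e'),
      IsCartesianMor p φ → IsCartesianMor q (r.map φ))
    (hallE : ∀ {e e' : E} (φ : e ⟶ e'), IsCartesianMor p φ)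
    (hallF : ∀ {f f' : F} (φ : f ⟶ f'), IsCartesianMor q φ)
    (hfiber : ∀ (e : E) (f : F) (g : f ⟶ r.obj e),
      (∃ hq : q.obj f = q.obj (r.obj e), q.map g = eqToHom hq) →
      ∃! s : Σ e' : E, (e' ⟶ e),
        (∃ hp : p.obj s.1 = p.obj e, p.map s.2 = eqToHom hp) ∧
        ∃ h : r.obj s.1 = f, r.map s.2 = eqToHom h ≫ g) :
    ∀ (e : E) (f : F) (g : f ⟶ r.obj e),
      ∃! s : Σ e' : E, (e' ⟶ e),
        ∃ h : r.obj s.1 = f, r.map s.2 = eqToHom h ≫ g := by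
  intro e f g
  -- lift q.map g through p
  obtain ⟨e', ψ, hb, hcart, hpψ⟩ :=
    hpfib e (q.obj f) (q.map g ≫ eqToHom (hcommObj e))
  have h1 : q.obj (r.obj e') = q.obj f := (hcommObj e').trans hb
  have hqrψ : q.map (r.map ψ) = eqToHom h1 ≫ q.map g := by
    rw [hcommMap ψ, hpψ]
    simp
  -- lift g vertically through r.map ψ
  obtain ⟨g₀, ⟨hg₀q, hg₀c⟩, hg₀uniq⟩ :=
    hallF (r.map ψ) f g (eqToHom h1.symm) (by rw [hqrψ]; simp)
  -- fiberwise lift of g₀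
  obtain ⟨⟨e₀, χ⟩, ⟨⟨hp₀, hpχ⟩, ⟨hr₀, hrχ⟩⟩, huniq⟩ :=
    hfiber e' f g₀ ⟨h1.symm, by rw [hg₀q]⟩
  refine ⟨⟨e₀, χ ≫ ψ⟩, ⟨hr₀, ?_⟩, ?_⟩
  · rw [r.map_comp, hrχ, Category.assoc, hg₀c]
  · rintro ⟨e₁, θ⟩ ⟨h₁, hrθ⟩
    have h2 : p.obj e₁ = p.obj e' := by
      rw [← hcommObj e₁, h₁, ← hb]
    have hpθ : p.map θ = eqToHom h2 ≫ p.map ψ := by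
      calc p.map θ = eqToHom (hcommObj e₁).symm ≫ q.map (r.map θ) ≫ eqToHom (hcommObj e) := by
            rw [hcommMap θ]; simp
        _ = eqToHom h2 ≫ p.map ψ := by
            rw [hrθ, hpψ]; simp [eqToHom_map]
    obtain ⟨χ', ⟨hpχ', hcχ'⟩, _⟩ := hcart e₁ θ (eqToHom h2) hpθ
    -- r.map χ' equals eqToHom h₁ ≫ g₀ by uniqueness of lifts through r.map ψ
    have h3 : q.obj (r.obj e₁) = q.obj (r.obj e') := by rw [h₁, h1]
    have key := hallF (r.map ψ) (r.obj e₁) (r.map θ) (eqToHom h3)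
      (by rw [hcommMap θ, hpθ, hcommMap ψ]; simp)
    have e1 : r.map χ' = eqToHom h₁ ≫ g₀ := by
      have ha : q.map (r.map χ') = eqToHom h3 ∧ r.map χ' ≫ r.map ψ = r.map θ := by
        constructor
        · rw [hcommMap χ', hpχ']; simp
        · rw [← r.map_comp, hcχ']
      have hb' : q.map (eqToHom h₁ ≫ g₀) = eqToHom h3 ∧
          (eqToHom h₁ ≫ g₀) ≫ r.map ψ = r.map θ := by
        constructor
        · simp [hg₀q, eqToHom_map]
        · rw [Category.assoc, hg₀c, hrθ]
      exact (key.unique ha hb').symm ▸ rfl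
    have := e1
    have hs : (⟨e₁, χ'⟩ : Σ e'', e'' ⟶ e') = ⟨e₀, χ⟩ :=
      huniq ⟨e₁, χ'⟩ ⟨⟨h2, hpχ'⟩, ⟨h₁, e1⟩⟩
    injection hs with he hheq
    subst he
    have hχ : χ' = χ := eq_of_heq hheq
    have : θ = χ ≫ ψ := by rw [← hχ, hcχ']
    rw [this]
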